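/- Let A₁,…,A_j be left-orthonormal cores with R_0 = 1, and let p be the squared-row-norm distribution of A_{≤j} normalized by 1/R_j. Define random variables by: draw r̂ uniformly from [R_j], then for k = j down to 1 draw t̂_k with probability proportional to ‖A_k[:,t_k,:]·h_{>k}‖² where h_{>k} = A_{k+1}[:,t̂_{k+1},:]·…·A_j[:,t̂_j, r̂]. Then the joint distribution of (t̂_1,…,t̂_j), after marginalizing over r̂, equals p. -/

import Mathlib

/-!
Fix `r̂`. The factor of the sampler at position `κ` is
`‖A_κ[:,t_κ,:] h_{>κ}‖² / ∑ᵢ ‖A_κ[:,i,:] h_{>κ}‖²`. Its numerator is `‖h_{>κ-1}‖²`, and by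
left-orthonormality of `A_κ` its denominator is `‖h_{>κ}‖²`. Hence the product over `κ` telescopes
to `‖h_{>0}‖² / ‖h_{>j}‖² = A_{≤j}[t, r̂]²`: `h_{>j} = e_{r̂}`, and since `R_0 = 1` the vector
`h_{>0}` is the single entry `A_{≤j}[t, r̂]`. Every numerator is at most its denominator, so
vanishing denominators do no harm.
-/

open Matrix

variable (R I : ℕ → ℕ)

/-- The `i`-th lateral ttSlice `A_k[:, i, :]` of the `k`-th TT-core. -/
def ttSlice (𝒜 : (k : ℕ) → Fin (R k) → Fin (I k) → Fin (R (k + 1)) → ℝ)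
    (k : ℕ) (i : Fin (I k)) : Matrix (Fin (R k)) (Fin (R (k + 1))) ℝ :=
  fun a b => 𝒜 k a i b

/-- Entry of the chain matricization `A_{≤j}`:
`A_{≤j}[(i_1,…,i_j), r_j] = Σ_{r_0,…,r_{j-1}} ∏_{k=1}^j A_k(r_{k-1}, i_k, r_k)`. -/
def chainEntry (𝒜 : (k : ℕ) → Fin (R k) → Fin (I k) → Fin (R (k + 1)) → ℝ)
    (j : ℕ) (s : ∀ k : Fin j, Fin (I k)) (rj : Fin (R j)) : ℝ :=
  ∑ p : ∀ k : Fin j, Fin (R k), ∏ k : Fin j,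
    𝒜 k (p k) (s k)
      (if h : (k : ℕ) + 1 < j then p ⟨k + 1, h⟩
       else Fin.cast (congrArg R (by have := k.isLt; omega)) rj)

/-- Product of lateral slices `A₁[:,s₁,:] ⋯ A_j[:,s_j,:]`. -/
def sliceProd (𝒜 : (k : ℕ) → Fin (R k) → Fin (I k) → Fin (R (k + 1)) → ℝ) :
    (j : ℕ) → (∀ k : Fin j, Fin (I k)) → Matrix (Fin (R 0)) (Fin (R j)) ℝ
  | 0, _ => 1
  | n + 1, s =>
      sliceProd 𝒜 n (fun k => s ⟨k.1, Nat.lt_succ_of_lt k.2⟩) *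
        ttSlice R I 𝒜 n (s ⟨n, Nat.lt_succ_self n⟩)

/-- Product of lateral slices from position `a` (inclusive), `d` slices long:
`A_{a+1}[:,s_{a+1},:] ⋯ A_{a+d}[:,s_{a+d},:]`. -/
def prodFrom (𝒜 : (k : ℕ) → Fin (R k) → Fin (I k) → Fin (R (k + 1)) → ℝ)
    (j : ℕ) (s : ∀ k : Fin j, Fin (I k)) (a : ℕ) :
    (d : ℕ) → a + d ≤ j → Matrix (Fin (R a)) (Fin (R (a + d))) ℝ
  | 0, _ => (1 : Matrix (Fin (R a)) (Fin (R a)) ℝ)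
  | d + 1, h =>
      prodFrom 𝒜 j s a d (by omega) * ttSlice R I 𝒜 (a + d) (s ⟨a + d, by omega⟩)

open Finset

theorem sum_sq_mulVec_of_sum_transpose_mul_self_eq_one {ι m n 𝕜 : Type*} [Fintype ι] [Fintype m]
    [Fintype n] [DecidableEq n] [CommRing 𝕜] (M : ι → Matrix m n 𝕜)
    (hM : ∑ i, (M i)ᵀ * M i = 1) (v : n → 𝕜) :
    ∑ i, ∑ a, (M i *ᵥ v) a ^ 2 = ∑ b, v b ^ 2 := by
  simp only [sq]
  change ∑ i, (M i *ᵥ v) ⬝ᵥ (M i *ᵥ v) = v ⬝ᵥ v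
  have hquad : ∀ i, (M i *ᵥ v) ⬝ᵥ (M i *ᵥ v) = v ⬝ᵥ ((M i)ᵀ * M i) *ᵥ v := fun i => by
    rw [← mulVec_mulVec, dotProduct_mulVec v, vecMul_transpose]
  rw [sum_congr rfl fun i _ => hquad i, ← dotProduct_sum, ← sum_mulVec, hM, one_mulVec]

-- Without the hypothesis a factor `f k / 0 = 0` would break the telescoping.
theorem prod_div_succ_mul_last {G₀ : Type*} [CommGroupWithZero G₀] :
    ∀ {n : ℕ} (f : Fin (n + 1) → G₀), (∀ k : Fin n, f k.succ = 0 → f k.castSucc = 0) →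
      (∏ k : Fin n, f k.castSucc / f k.succ) * f (Fin.last n) = f 0
  | 0, f, _ => by simp
  | n + 1, f, hf => by
    rw [Fin.prod_univ_castSucc, mul_assoc, ← Fin.succ_last,
      div_mul_cancel_of_imp (hf (Fin.last n))]
    simpa only [Fin.succ_castSucc, Fin.castSucc_zero] using
      prod_div_succ_mul_last (fun k => f k.castSucc)
        (fun k => by simpa only [Fin.succ_castSucc] using hf k.castSucc)

section

variable {R I} (𝒜 : (k : ℕ) → Fin (R k) → Fin (I k) → Fin (R (k + 1)) → ℝ)

lemma ttSlice_cast {j : ℕ} (s : ∀ k : Fin j, Fin (I k)) {n m : ℕ} (h : n = m) (hn : n < j)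
    (x : Fin (R n)) (y : Fin (R (n + 1))) :
    ttSlice R I 𝒜 n (s ⟨n, hn⟩) x y =
      ttSlice R I 𝒜 m (s ⟨m, h ▸ hn⟩) (Fin.cast (congrArg R h) x)
        (Fin.cast (congrArg R (by rw [h])) y) := by
  subst h; rfl

lemma prodFrom_cast_length {j : ℕ} (s : ∀ k : Fin j, Fin (I k)) (a : ℕ) {d d' : ℕ} (hd : d = d')
    (h : a + d ≤ j) (x : Fin (R a)) (y : Fin (R (a + d))) :
    prodFrom R I 𝒜 j s a d h x y =
      prodFrom R I 𝒜 j s a d' (hd ▸ h) x (Fin.cast (congrArg R (by rw [hd])) y) := by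
  subst hd; rfl

lemma prodFrom_congr {j j' : ℕ} (s : ∀ k : Fin j, Fin (I k)) (s' : ∀ k : Fin j', Fin (I k))
    (a : ℕ) : ∀ (d : ℕ) (h : a + d ≤ j) (h' : a + d ≤ j'),
    (∀ k (hk : k < a + d), s ⟨k, by omega⟩ = s' ⟨k, by omega⟩) →
    prodFrom R I 𝒜 j s a d h = prodFrom R I 𝒜 j' s' a d h'
  | 0, _, _, _ => rfl
  | d + 1, h, h', hs => by
    rw [prodFrom, prodFrom, prodFrom_congr s s' a d (by omega) (by omega)
      (fun k hk => hs k (by omega)), hs (a + d) (by omega)]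

lemma prodFrom_succ_left {j : ℕ} (s : ∀ k : Fin j, Fin (I k)) (a : ℕ) :
    ∀ (d : ℕ) (h : a + (d + 1) ≤ j) (x : Fin (R a)) (y : Fin (R (a + (d + 1)))),
    prodFrom R I 𝒜 j s a (d + 1) h x y =
      (ttSlice R I 𝒜 a (s ⟨a, by omega⟩) *ᵥ fun m =>
        prodFrom R I 𝒜 j s (a + 1) d (by omega) m (Fin.cast (congrArg R (by omega)) y)) x
  | 0, h, x, y => by
    simp [prodFrom, Matrix.mulVec, dotProduct, Matrix.one_apply]
  | d + 1, h, x, y => by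
    rw [prodFrom, Matrix.mul_apply]
    simp_rw [prodFrom_succ_left s a d (by omega)]
    simp only [Matrix.mulVec, dotProduct, sum_mul, mul_assoc]
    rw [sum_comm]
    refine sum_congr rfl fun m _ => ?_
    rw [← mul_sum, prodFrom, Matrix.mul_apply]
    congr 1
    rw [← (finCongr (congrArg R (by omega : a + (d + 1) = a + 1 + d))).sum_comp]
    refine sum_congr rfl fun q _ => ?_
    rw [ttSlice_cast 𝒜 s (by omega : a + (d + 1) = a + 1 + d)]
    rfl

lemma chainEntry_succ (j : ℕ) (t : ∀ k : Fin (j + 1), Fin (I k)) (r : Fin (R (j + 1))) :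
    chainEntry R I 𝒜 (j + 1) t r =
      ∑ q : Fin (R j), chainEntry R I 𝒜 j (fun k => t k.castSucc) q *
        𝒜 j q (t (Fin.last j)) r := by
  unfold chainEntry
  rw [← (Fin.snocEquiv fun k : Fin (j + 1) => Fin (R k)).sum_comp, Fintype.sum_prod_type]
  refine sum_congr rfl fun q _ => ?_
  rw [sum_mul]
  refine sum_congr rfl fun p _ => ?_
  rw [Fin.prod_univ_castSucc]
  simp only [Fin.snocEquiv_apply, Fin.snoc_castSucc, Fin.snoc_last, Fin.val_castSucc,
    Fin.val_last, lt_irrefl, dite_false, add_lt_add_iff_right, Fin.is_lt, dite_true]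
  congr 1
  refine prod_congr rfl fun k _ => ?_
  congr 1
  unfold Fin.snoc
  split_ifs <;> simp [Fin.cast_eq_cast]

lemma chainEntry_eq_sum_prodFrom :
    ∀ (j : ℕ) (t : ∀ k : Fin j, Fin (I k)) (r : Fin (R j)),
    chainEntry R I 𝒜 j t r =
      ∑ x : Fin (R 0), prodFrom R I 𝒜 j t 0 j (by omega) x (Fin.cast (by rw [zero_add]) r)
  | 0, t, r => by
    simp [chainEntry, prodFrom, Matrix.one_apply]
  | j + 1, t, r => by
    rw [chainEntry_succ, prodFrom, prodFrom_congr 𝒜 t (fun k => t k.castSucc) 0 j (by omega)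
      (by omega) (fun k hk => rfl)]
    simp only [Matrix.mul_apply, chainEntry_eq_sum_prodFrom j, sum_mul]
    rw [sum_comm]
    refine sum_congr rfl fun x _ => ?_
    rw [← (finCongr (congrArg R (zero_add j).symm)).sum_comp]
    refine sum_congr rfl fun q _ => ?_
    rw [ttSlice_cast 𝒜 t (zero_add j) (by omega)]
    rfl

/-- `A_a[:,t_a,:] ⋯ A_{j-1}[:,t_{j-1},r]` with 0-based positions: the vector `h_{>κ}` of the sampler
is `tailVec 𝒜 j t r (κ + 1)`, and `h_{>j} = e_r`. -/
def tailVec (j : ℕ) (t : ∀ k : Fin j, Fin (I k)) (r : Fin (R j)) (a : ℕ) (ha : a ≤ j) :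
    Fin (R a) → ℝ :=
  fun x => prodFrom R I 𝒜 j t a (j - a) (by omega) x (Fin.cast (congrArg R (by omega)) r)

variable {j : ℕ} (t : ∀ k : Fin j, Fin (I k)) (r : Fin (R j))

lemma ttSlice_mulVec_tailVec (κ : Fin j) :
    ttSlice R I 𝒜 κ (t κ) *ᵥ tailVec 𝒜 j t r (κ + 1) κ.isLt = tailVec 𝒜 j t r κ κ.isLt.le := by
  funext x
  rw [tailVec, prodFrom_cast_length 𝒜 t κ (by omega : j - κ = j - (κ + 1) + 1),
    prodFrom_succ_left]
  rfl

lemma sum_sq_tailVec_le_succ (κ : Fin j)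
    (hortho : ∑ i, (ttSlice R I 𝒜 κ i)ᵀ * ttSlice R I 𝒜 κ i = 1) :
    ∑ x, tailVec 𝒜 j t r κ κ.isLt.le x ^ 2 ≤ ∑ x, tailVec 𝒜 j t r (κ + 1) κ.isLt x ^ 2 := by
  rw [← ttSlice_mulVec_tailVec, ← sum_sq_mulVec_of_sum_transpose_mul_self_eq_one _ hortho]
  exact single_le_sum (f := fun i => ∑ a, (ttSlice R I 𝒜 κ i *ᵥ _) a ^ 2)
    (fun i _ => sum_nonneg fun a _ => sq_nonneg _) (mem_univ (t κ))

lemma sum_sq_tailVec_self : ∑ x, tailVec 𝒜 j t r j le_rfl x ^ 2 = 1 := by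
  simp only [tailVec]
  simp_rw [prodFrom_cast_length 𝒜 t j (Nat.sub_self j)]
  simp [prodFrom, Matrix.one_apply]

lemma sum_sq_tailVec_zero (hR0 : R 0 = 1) :
    ∑ x, tailVec 𝒜 j t r 0 (Nat.zero_le j) x ^ 2 = chainEntry R I 𝒜 j t r ^ 2 := by
  have : Subsingleton (Fin (R 0)) := Fin.subsingleton_iff_le_one.mpr hR0.le
  let x₀ : Fin (R 0) := Fin.cast hR0.symm 0
  rw [chainEntry_eq_sum_prodFrom, Fintype.sum_subsingleton _ x₀, Fintype.sum_subsingleton _ x₀]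
  rfl

end

/-- **Correctness of the chain sampler.** Draw `r̂` uniformly from `[R_j]`; then
for `κ = j-1` down to `0` (0-based positions) draw `t̂_κ` with probability
proportional to `‖A_κ[:,t_κ,:]·h_{>κ}‖²`, where
`h_{>κ} = A_{κ+1}[:,t̂_{κ+1},:] ⋯ A_j[:,t̂_j, r̂]` (and `h_{>j} = e_{r̂}`).
After marginalizing over `r̂`, the joint distribution of `(t̂_1,…,t̂_j)` equals
the squared-row-norm distribution `p(t) = ‖A_{≤j}[t,:]‖²/R_j`. -/
theorem chain_sampler_correct
    (𝒜 : (k : ℕ) → Fin (R k) → Fin (I k) → Fin (R (k + 1)) → ℝ)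
    (j : ℕ) (hR0 : R 0 = 1)
    (hortho : ∀ k, k < j →
      ∑ i : Fin (I k), (ttSlice R I 𝒜 k i)ᵀ * ttSlice R I 𝒜 k i = 1)
    (t : ∀ m : Fin j, Fin (I m)) :
    (R j : ℝ)⁻¹ *
        ∑ r : Fin (R j), ∏ κ : Fin j,
          (fun w : Fin (I κ) → ℝ => w (t κ) / ∑ i : Fin (I κ), w i)
            (fun i : Fin (I κ) =>
              ∑ a : Fin (R κ),
                (ttSlice R I 𝒜 κ i *ᵥ
                  (fun x =>
                    prodFrom R I 𝒜 j t ((κ : ℕ) + 1) (j - ((κ : ℕ) + 1))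
                        (by have := κ.isLt; omega) x
                      (Fin.cast (congrArg R (by have := κ.isLt; omega)) r))) a ^ 2) =
      (R j : ℝ)⁻¹ * ∑ r : Fin (R j), chainEntry R I 𝒜 j t r ^ 2 := by
  congr 1
  refine sum_congr rfl fun r _ => ?_
  let f : Fin (j + 1) → ℝ := fun a => ∑ x, tailVec 𝒜 j t r a a.is_le x ^ 2
  have hmono (κ : Fin j) : f κ.castSucc ≤ f κ.succ :=
    sum_sq_tailVec_le_succ 𝒜 t r κ (hortho κ κ.isLt)
  calc _ = ∏ κ : Fin j, f κ.castSucc / f κ.succ := by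
        refine prod_congr rfl fun κ _ => ?_
        change (∑ a, (ttSlice R I 𝒜 κ (t κ) *ᵥ tailVec 𝒜 j t r (κ + 1) κ.isLt) a ^ 2) /
          ∑ i, ∑ a, (ttSlice R I 𝒜 κ i *ᵥ tailVec 𝒜 j t r (κ + 1) κ.isLt) a ^ 2 = _
        rw [sum_sq_mulVec_of_sum_transpose_mul_self_eq_one _ (hortho κ κ.isLt),
          ttSlice_mulVec_tailVec]
        rfl
    _ = f 0 := by
        simpa [f, sum_sq_tailVec_self] using prod_div_succ_mul_last f fun κ h =>
          le_antisymm (h ▸ hmono κ) (sum_nonneg fun _ _ => sq_nonneg _)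
    _ = chainEntry R I 𝒜 j t r ^ 2 := sum_sq_tailVec_zero 𝒜 t r hR0
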